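/- arXiv:2208.03076 — 3 statements merged into one kernel-verified Lean document; each statement's English description precedes it below -/
import Mathlib

section
/- Let E be a finite-dimensional real inner product space and K ⊆ E a self-dual closed convex cone (i.e. K = {w ∈ E : ⟨w,y⟩ ≥ 0 for all y ∈ K}). Let g : ℝⁿ → E and h : ℝⁿ → ℝᵖ be continuously differentiable and define Φ(x) = (1/2)(‖h(x)‖² + ‖Π_K(−g(x))‖²). Then Φ is differentiable on ℝⁿ and for every x ∈ ℝⁿ, ∇Φ(x) = Dh(x)ᵀ h(x) − Dg(x)*[Π_K(−g(x))], where Dg(x)*[w] = (⟨∂₁g(x), w⟩, …, ⟨∂ₙg(x), w⟩) is the adjoint of the derivative Dg(x). -/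
/-!
STATEMENT 0: Gradient of the infeasibility measure
Φ(x) = (1/2)(‖h(x)‖² + ‖Π_K(−g(x))‖²), namely
∇Φ(x) = Dh(x)ᵀ h(x) − Dg(x)*[Π_K(−g(x))].
-/

open Filter Topology Set
open scoped InnerProductSpace

-- Metric projection onto a set `K` (the unique nearest point when `K` is a
-- nonempty closed convex subset of a complete inner product space).
open Classical in
noncomputable def projCC {E : Type*} [NormedAddCommGroup E] (K : Set E) (w : E) : E :=
  if h : ∃ p ∈ K, ∀ q ∈ K, ‖w - p‖ ≤ ‖w - q‖ then h.choose else 0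

/-
For the nearest-point map `Π` onto a nonempty closed convex set, `u ↦ ½‖u - Π u‖²` has gradient
`u - Π u`: the variational inequality `⟪w - Π w, q - Π w⟫ ≤ 0` (`q ∈ K`) squeezes its increment
at `w` in direction `d` between `⟪w - Π w, d⟫` and `⟪w - Π w, d⟫ + ½‖d‖²`. If `K` is a closed
cone, testing the variational inequality at `q = 0` and `q = 2 Π w` gives `w - Π w ⟂ Π w`, so
`½‖Π u‖² = ½‖u‖² - ½‖u - Π u‖²` has gradient `Π u`. A self-dual `K` is its own inner dual, hence
a closed cone, and the chain rule `∇(f ∘ A)(x) = DA(x)† ∇f(A x)` gives the formula for `∇Φ`.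
-/

section Gradient

variable {F G : Type*} [NormedAddCommGroup F] [InnerProductSpace ℝ F] [CompleteSpace F]

theorem hasGradientAt_half_sq_norm (x : F) : HasGradientAt (fun y => 1 / 2 * ‖y‖ ^ 2) x x := by
  rw [hasGradientAt_iff_hasFDerivAt]
  refine ((hasStrictFDerivAt_norm_sq x).hasFDerivAt.const_mul (1 / 2 : ℝ)).congr_fderiv ?_
  ext d
  simp

variable [NormedAddCommGroup G] [InnerProductSpace ℝ G] [CompleteSpace G]

theorem HasGradientAt.comp_hasFDerivAt {f : F → ℝ} {f' : F} {g : G → F} {g' : G →L[ℝ] F}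
    {x : G} (hf : HasGradientAt f f' (g x)) (hg : HasFDerivAt g g' x) :
    HasGradientAt (f ∘ g) (g'.adjoint f') x := by
  rw [hasGradientAt_iff_hasFDerivAt]
  refine (hf.hasFDerivAt.comp x hg).congr_fderiv ?_
  ext d
  simp [ContinuousLinearMap.adjoint_inner_left]

end Gradient

section Projection

variable {E : Type*} [NormedAddCommGroup E] [InnerProductSpace ℝ E] {K : Set E}

theorem exists_forall_norm_sub_le (hne : K.Nonempty) (hc : IsComplete K) (hconv : Convex ℝ K)
    (w : E) : ∃ p ∈ K, ∀ q ∈ K, ‖w - p‖ ≤ ‖w - q‖ := by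
  obtain ⟨p, hp, hmin⟩ := exists_norm_eq_iInf_of_complete_convex hne hc hconv w
  have : Nonempty K := hne.to_subtype
  exact ⟨p, hp, fun q hq => hmin ▸
    ciInf_le ⟨0, Set.forall_mem_range.2 fun _ => norm_nonneg _⟩ (⟨q, hq⟩ : K)⟩

theorem projCC_mem (hne : K.Nonempty) (hc : IsComplete K) (hconv : Convex ℝ K) (w : E) :
    projCC K w ∈ K := by
  have hex := exists_forall_norm_sub_le hne hc hconv w
  rw [projCC, dif_pos hex]
  exact hex.choose_spec.1

theorem norm_sub_projCC_le (hne : K.Nonempty) (hc : IsComplete K) (hconv : Convex ℝ K)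
    (w : E) {q : E} (hq : q ∈ K) : ‖w - projCC K w‖ ≤ ‖w - q‖ := by
  have hex := exists_forall_norm_sub_le hne hc hconv w
  rw [projCC, dif_pos hex]
  exact hex.choose_spec.2 q hq

theorem inner_sub_projCC_sub_projCC_nonpos (hne : K.Nonempty) (hc : IsComplete K)
    (hconv : Convex ℝ K) (w : E) {q : E} (hq : q ∈ K) :
    ⟪w - projCC K w, q - projCC K w⟫_ℝ ≤ 0 := by
  have hmem := projCC_mem hne hc hconv w
  have : Nonempty K := hne.to_subtype
  refine (norm_eq_iInf_iff_real_inner_le_zero hconv hmem).1 ?_ q hq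
  refine le_antisymm (le_ciInf fun q => norm_sub_projCC_le hne hc hconv w q.2) ?_
  exact ciInf_le ⟨0, Set.forall_mem_range.2 fun _ => norm_nonneg _⟩ (⟨_, hmem⟩ : K)

theorem abs_half_sq_norm_sub_projCC_sub_le (hne : K.Nonempty) (hc : IsComplete K)
    (hconv : Convex ℝ K) (w d : E) :
    |1 / 2 * ‖w + d - projCC K (w + d)‖ ^ 2 - 1 / 2 * ‖w - projCC K w‖ ^ 2
      - ⟪w - projCC K w, d⟫_ℝ| ≤ 1 / 2 * ‖d‖ ^ 2 := by
  set p := projCC K w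
  set q := projCC K (w + d)
  have hupper : ‖w + d - q‖ ^ 2 ≤ ‖(w - p) + d‖ ^ 2 := by
    rw [show (w - p) + d = w + d - p by abel]
    exact pow_le_pow_left₀ (norm_nonneg _)
      (norm_sub_projCC_le hne hc hconv _ (projCC_mem hne hc hconv w)) 2
  have hlower : ‖w + d - q‖ ^ 2 = ‖(w - p) + (d - (q - p))‖ ^ 2 := by
    congr 2; abel
  have hvi : ⟪w - p, q - p⟫_ℝ ≤ 0 :=
    inner_sub_projCC_sub_projCC_nonpos hne hc hconv w (projCC_mem hne hc hconv _)
  rw [norm_add_sq_real] at hupper hlower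
  rw [inner_sub_right] at hlower
  rw [abs_le]
  constructor <;> nlinarith [sq_nonneg ‖d - (q - p)‖]

theorem hasGradientAt_half_sq_norm_sub_projCC [CompleteSpace E] (hne : K.Nonempty)
    (hc : IsComplete K) (hconv : Convex ℝ K) (w : E) :
    HasGradientAt (fun u => 1 / 2 * ‖u - projCC K u‖ ^ 2) (w - projCC K w) w := by
  rw [hasGradientAt_iff_isLittleO_nhds_zero]
  refine Asymptotics.IsBigO.trans_isLittleO ?_ (Asymptotics.isLittleO_norm_pow_id one_lt_two)
  refine Asymptotics.IsBigO.of_bound (1 / 2) (Eventually.of_forall fun d => ?_)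
  simpa [Real.norm_eq_abs, abs_of_nonneg (sq_nonneg ‖d‖)]
    using abs_half_sq_norm_sub_projCC_sub_le hne hc hconv w d

end Projection

section Cone

variable {E : Type*} [NormedAddCommGroup E] [InnerProductSpace ℝ E] [CompleteSpace E]
  (C : ProperCone ℝ E)

theorem ProperCone.inner_sub_projCC_projCC (w : E) :
    ⟪w - projCC C w, projCC C w⟫_ℝ = 0 := by
  have hc := C.isClosed.isComplete
  have hmem := projCC_mem C.nonempty hc C.convex w
  have h2 := inner_sub_projCC_sub_projCC_nonpos C.nonempty hc C.convex w
    (C.smul_mem hmem zero_le_two)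
  have h0 := inner_sub_projCC_sub_projCC_nonpos C.nonempty hc C.convex w C.zero_mem
  rw [two_smul, add_sub_cancel_right] at h2
  rw [zero_sub, inner_neg_right] at h0
  linarith

theorem ProperCone.sq_norm_projCC (w : E) :
    ‖projCC C w‖ ^ 2 = ‖w‖ ^ 2 - ‖w - projCC C w‖ ^ 2 := by
  have := norm_add_sq_real (w - projCC C w) (projCC C w)
  rw [sub_add_cancel, C.inner_sub_projCC_projCC] at this
  linarith

theorem ProperCone.hasGradientAt_half_sq_norm_projCC (w : E) :
    HasGradientAt (fun u => 1 / 2 * ‖projCC C u‖ ^ 2) (projCC C w) w := by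
  have hdist := hasGradientAt_half_sq_norm_sub_projCC C.nonempty C.isClosed.isComplete
    C.convex w
  have hsq := (hasGradientAt_half_sq_norm w).hasFDerivAt.sub hdist.hasFDerivAt
  rw [← map_sub, sub_sub_cancel] at hsq
  have hfun : (fun u => 1 / 2 * ‖projCC (C : Set E) u‖ ^ 2)
      = (fun y => 1 / 2 * ‖y‖ ^ 2) - fun u => 1 / 2 * ‖u - projCC (C : Set E) u‖ ^ 2 := by
    ext u
    rw [Pi.sub_apply, C.sq_norm_projCC]
    ring
  rwa [hasGradientAt_iff_hasFDerivAt, hfun]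

end Cone

theorem coe_innerDual_eq_of_eq_setOf_inner_nonneg {E : Type*} [NormedAddCommGroup E]
    [InnerProductSpace ℝ E] [CompleteSpace E] {K : Set E}
    (hK : K = {w : E | ∀ y ∈ K, 0 ≤ ⟪w, y⟫_ℝ}) :
    (ProperCone.innerDual K : Set E) = K := by
  conv_rhs => rw [hK]
  ext w
  simp [real_inner_comm]

theorem stmt_0 {n p : ℕ} {E : Type*} [NormedAddCommGroup E] [InnerProductSpace ℝ E]
    [FiniteDimensional ℝ E]
    (K : Set E)
    -- `K` is a self-dual (hence closed convex) cone:
    (hK : K = {w : E | ∀ y ∈ K, 0 ≤ ⟪w, y⟫_ℝ})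
    (g : EuclideanSpace ℝ (Fin n) → E) (h : EuclideanSpace ℝ (Fin n) → EuclideanSpace ℝ (Fin p))
    (hg : ContDiff ℝ 1 g) (hh : ContDiff ℝ 1 h)
    (Φ : EuclideanSpace ℝ (Fin n) → ℝ)
    (hΦ : Φ = fun x => (1 / 2) * (‖h x‖ ^ 2 + ‖projCC K (-(g x))‖ ^ 2)) :
    ∀ x : EuclideanSpace ℝ (Fin n),
      HasGradientAt Φ
        ((fderiv ℝ h x).adjoint (h x) - (fderiv ℝ g x).adjoint (projCC K (-(g x)))) x := by
  intro x
  have hgx := (hg.differentiable one_ne_zero x).hasFDerivAt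
  have hhx := (hh.differentiable one_ne_zero x).hasFDerivAt
  have hnorm := ((hasGradientAt_half_sq_norm (h x)).comp_hasFDerivAt hhx).hasFDerivAt
  have hproj := (((ProperCone.innerDual K).hasGradientAt_half_sq_norm_projCC
    (-g x)).comp_hasFDerivAt (g := fun y => -g y) hgx.neg).hasFDerivAt
  rw [coe_innerDual_eq_of_eq_setOf_inner_nonneg hK, map_neg] at hproj
  have hsum := hnorm.add hproj
  rw [← map_add, neg_apply, ← sub_eq_add_neg] at hsum
  have hΦ_eq : Φ = (fun y => 1 / 2 * ‖y‖ ^ 2) ∘ h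
      + (fun u => 1 / 2 * ‖projCC K u‖ ^ 2) ∘ fun y => -g y := by
    ext y
    rw [hΦ, Pi.add_apply, Function.comp_apply, Function.comp_apply]
    ring
  rwa [hasGradientAt_iff_hasFDerivAt, hΦ_eq]
end

section
/- Let F : ℝⁿ → ℝ be differentiable everywhere with ∇F locally Lipschitz, and define the generalized Hessian ∂²F(x) as the convex hull of the set of all n×n matrices M for which there exists a sequence xᵏ → x of points where ∇F is differentiable and D∇F(xᵏ) → M. If x* is a local minimizer of F, then ∇F(x*) = 0 and for every d ∈ ℝⁿ there exists a matrix M ∈ ∂²F(x*) such that dᵀ M d ≥ 0. -/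
/-!
The first-order condition is Fermat's rule. For the second-order one fix `d`, and suppose that
`⟪d, D∇F(y) d⟫ ≤ -ε` at every point `y` near `x*` where `∇F` is differentiable. By Rademacher's
theorem this holds almost everywhere near `x*`. The line through `x*` in direction `d` may miss
every point of differentiability, so we average `g = ⟪d, ∇F ·⟫` over small balls and differentiate
under the integral: this gives `g (x* + τ d) ≤ g x* - ε τ = -ε τ` for small `τ > 0`, so
`t ↦ F (x* + t d)` is strictly decreasing near `0⁺`, contradicting minimality. Hence there are
differentiability points `yₖ → x*` with `⟪d, D∇F(yₖ) d⟫ > -1/(k+1)`. The local Lipschitz constant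
bounds `‖D∇F(yₖ)‖`, so a subsequence converges to some `M ∈ ∂_B ∇F(x*) ⊆ ∂²F(x*)`, and
`⟪d, M d⟫ ≥ 0`.
-/

open Filter Topology Set
open scoped InnerProductSpace

/-- The B-subdifferential of a map `F` at `x`: limits of derivatives of `F`
along sequences of differentiability points converging to `x`. -/
def Bsub {X Y : Type*} [NormedAddCommGroup X] [NormedSpace ℝ X]
    [NormedAddCommGroup Y] [NormedSpace ℝ Y] (F : X → Y) (x : X) : Set (X →L[ℝ] Y) :=
  {V | ∃ u : ℕ → X, Tendsto u atTop (𝓝 x) ∧ (∀ k, DifferentiableAt ℝ F (u k)) ∧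
    Tendsto (fun k => fderiv ℝ F (u k)) atTop (𝓝 V)}

/-- The generalized Hessian `∂²F(x)` of a differentiable function `F` is the
convex hull of the set of limiting Hessians, i.e. the Clarke subdifferential of
the gradient map `∇F` at `x`. -/
noncomputable def genHessian {n : ℕ} (F : EuclideanSpace ℝ (Fin n) → ℝ)
    (x : EuclideanSpace ℝ (Fin n)) :
    Set (EuclideanSpace ℝ (Fin n) →L[ℝ] EuclideanSpace ℝ (Fin n)) :=
  convexHull ℝ (Bsub (fun y => gradient F y) x)

open MeasureTheory Metric
open scoped NNReal

theorem LipschitzOnWith.norm_sub_le_of_mem_ball {X W : Type*} [PseudoMetricSpace X]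
    [SeminormedAddCommGroup W] {g : X → W} {K : ℝ≥0} {x y : X} {ρ : ℝ}
    (hg : LipschitzOnWith K g (ball x ρ)) (hy : y ∈ ball x ρ) : ‖g y - g x‖ ≤ K * ρ := by
  rw [← dist_eq_norm]
  exact (hg.dist_le_mul y hy x (mem_ball_self (pos_of_mem_ball hy))).trans
    (by gcongr; exact (mem_ball.1 hy).le)

theorem LipschitzOnWith.comp_add_right {X W : Type*} [SeminormedAddCommGroup X]
    [PseudoMetricSpace W] {g : X → W} {K : ℝ≥0} {s t : Set X} (hg : LipschitzOnWith K g t) {v : X}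
    (h : MapsTo (· + v) s t) : LipschitzOnWith K (fun y => g (y + v)) s := by
  have := hg.comp (isometry_add_right v).lipschitz.lipschitzOnWith h
  rwa [mul_one] at this

theorem mapsTo_add_smul_ball {E : Type*} [SeminormedAddCommGroup E] [NormedSpace ℝ E]
    {x d : E} {ρ δ v : ℝ} (h : ρ + |v| * ‖d‖ ≤ δ) :
    MapsTo (· + v • d) (ball x ρ) (ball x δ) := fun y hy => by
  rw [mem_ball, dist_eq_norm, add_sub_right_comm]
  calc ‖y - x + v • d‖ ≤ ‖y - x‖ + |v| * ‖d‖ := by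
        simpa [norm_smul] using norm_add_le (y - x) (v • d)
    _ < δ := by rw [← dist_eq_norm]; linarith [mem_ball.1 hy]

section MeanValue

variable {E : Type*} [NormedAddCommGroup E] [NormedSpace ℝ E] [FiniteDimensional ℝ E]
  [MeasurableSpace E] [BorelSpace E] {μ : Measure E} [μ.IsAddHaarMeasure]
  {g : E → ℝ} {K : ℝ≥0} {x d : E} {ρ : ℝ}

theorem LipschitzOnWith.integrableOn_ball (hg : LipschitzOnWith K g (ball x ρ)) :
    IntegrableOn g (ball x ρ) μ := by
  refine .of_bound measure_ball_lt_top (hg.continuousOn.aestronglyMeasurable measurableSet_ball)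
    (‖g x‖ + K * ρ) (ae_restrict_of_forall_mem measurableSet_ball fun y hy => ?_)
  linarith [norm_le_insert' (g y) (g x), hg.norm_sub_le_of_mem_ball hy]

theorem LipschitzOnWith.abs_setIntegral_ball_sub_le (hg : LipschitzOnWith K g (ball x ρ)) :
    |∫ y in ball x ρ, g y ∂μ - μ.real (ball x ρ) * g x| ≤ μ.real (ball x ρ) * (K * ρ) := by
  rw [← smul_eq_mul, ← setIntegral_const, ← integral_sub hg.integrableOn_ball
    (integrableOn_const measure_ball_lt_top.ne), mul_comm]
  exact norm_setIntegral_le_of_norm_le_const measure_ball_lt_top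
    fun y hy => hg.norm_sub_le_of_mem_ball hy

theorem LipschitzOnWith.hasDerivAt_setIntegral_comp_add_smul {s : Set E} (hs : IsOpen s)
    (hg : LipschitzOnWith K g s) {u₀ : ℝ}
    (hmaps : ∀ᶠ u in 𝓝 u₀, MapsTo (· + u • d) (ball x ρ) s) :
    Integrable (fun y => fderiv ℝ g (y + u₀ • d) d) (μ.restrict (ball x ρ)) ∧
      HasDerivAt (fun u => ∫ y in ball x ρ, g (y + u • d) ∂μ)
        (∫ y in ball x ρ, fderiv ℝ g (y + u₀ • d) d ∂μ) u₀ := by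
  obtain ⟨η, hη, hmapsη⟩ := eventually_nhds_iff_ball.1 hmaps
  have hint : ∀ u ∈ ball u₀ η, IntegrableOn (fun y => g (y + u • d)) (ball x ρ) μ := fun u hu =>
    (hg.comp_add_right (hmapsη u hu)).integrableOn_ball
  have hdiff : ∀ᵐ z ∂μ, z ∈ s → DifferentiableAt ℝ g z := by
    filter_upwards [hg.ae_differentiableWithinAt_of_mem] with z hz hzs
    exact (hz hzs).differentiableAt (hs.mem_nhds hzs)
  have hdiff' : ∀ᵐ y ∂μ, y + u₀ • d ∈ s → DifferentiableAt ℝ g (y + u₀ • d) :=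
    (quasiMeasurePreserving_add_right μ (u₀ • d)).ae hdiff
  refine hasDerivAt_integral_of_dominated_loc_of_lip (bound := fun _ => ((K * ‖d‖₊ : ℝ≥0) : ℝ))
    (ball_mem_nhds u₀ hη) ?_ (hint u₀ (mem_ball_self hη)) ?_ ?_
    (integrableOn_const measure_ball_lt_top.ne) ?_
  · filter_upwards [ball_mem_nhds u₀ hη] with u hu using (hint u hu).aestronglyMeasurable
  · exact ((measurable_fderiv_apply_const ℝ g d).comp
      (measurable_add_const _)).aestronglyMeasurable
  · filter_upwards [ae_restrict_mem measurableSet_ball] with y hy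
    rw [Real.nnabs_coe]
    refine LipschitzOnWith.of_dist_le_mul fun u hu v hv => ?_
    calc dist (g (y + u • d)) (g (y + v • d))
        ≤ K * dist (y + u • d) (y + v • d) := hg.dist_le_mul _ (hmapsη u hu hy) _ (hmapsη v hv hy)
      _ = K * ‖d‖₊ * dist u v := by
        rw [dist_add_left, dist_eq_norm, ← sub_smul, norm_smul, Real.dist_eq, Real.norm_eq_abs]
        push_cast; ring
  · filter_upwards [ae_restrict_of_ae hdiff', ae_restrict_mem measurableSet_ball] with y hy hyB
    have hline : HasDerivAt (fun u : ℝ => y + u • d) d u₀ := by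
      simpa using ((hasDerivAt_id u₀).smul_const d).const_add y
    exact (hy (hmapsη u₀ (mem_ball_self hη) hyB)).hasFDerivAt.comp_hasDerivAt u₀ hline

theorem LipschitzOnWith.setIntegral_comp_add_smul_sub_le {δ c τ : ℝ}
    (hg : LipschitzOnWith K g (ball x δ)) (hc : ∀ᵐ y ∂μ, y ∈ ball x δ → fderiv ℝ g y d ≤ c)
    (hτ : 0 ≤ τ) (hρτ : ρ + τ * ‖d‖ < δ) :
    ∫ y in ball x ρ, g (y + τ • d) ∂μ - ∫ y in ball x ρ, g y ∂μ ≤ c * μ.real (ball x ρ) * τ := by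
  have hmaps : ∀ u ∈ Icc 0 τ, ∀ᶠ v in 𝓝 u, MapsTo (· + v • d) (ball x ρ) (ball x δ) := by
    intro u hu
    have hu' : ρ + |u| * ‖d‖ < δ := by
      rw [abs_of_nonneg hu.1]; nlinarith [norm_nonneg d, hu.2]
    have hopen : IsOpen {v : ℝ | ρ + |v| * ‖d‖ < δ} := isOpen_lt (by fun_prop) continuous_const
    filter_upwards [hopen.mem_nhds hu'] with v hv
    exact mapsTo_add_smul_ball hv.le
  have hderiv u (hu : u ∈ Icc 0 τ) :=
    hg.hasDerivAt_setIntegral_comp_add_smul (μ := μ) isOpen_ball (hmaps u hu)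
  have hderiv_le : ∀ u ∈ Icc 0 τ,
      ∫ y in ball x ρ, fderiv ℝ g (y + u • d) d ∂μ ≤ c * μ.real (ball x ρ) := by
    intro u hu
    have hc' : ∀ᵐ y ∂μ, y + u • d ∈ ball x δ → fderiv ℝ g (y + u • d) d ≤ c :=
      (quasiMeasurePreserving_add_right μ (u • d)).ae hc
    calc ∫ y in ball x ρ, fderiv ℝ g (y + u • d) d ∂μ ≤ ∫ _ in ball x ρ, c ∂μ := by
          refine setIntegral_mono_ae_restrict (hderiv u hu).1
            (integrableOn_const measure_ball_lt_top.ne) ?_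
          filter_upwards [ae_restrict_of_ae hc', ae_restrict_mem measurableSet_ball] with y hy hyB
          exact hy ((hmaps u hu).self_of_nhds hyB)
      _ = c * μ.real (ball x ρ) := by rw [setIntegral_const, smul_eq_mul, mul_comm]
  simpa using (convex_Icc 0 τ).image_sub_le_mul_sub_of_deriv_le
    (fun u hu => (hderiv u hu).2.continuousAt.continuousWithinAt)
    (fun u hu => (hderiv u (interior_subset hu)).2.differentiableAt.differentiableWithinAt)
    (fun u hu => (hderiv u (interior_subset hu)).2.deriv ▸ hderiv_le u (interior_subset hu))
    0 (left_mem_Icc.2 hτ) τ (right_mem_Icc.2 hτ) hτ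

theorem LipschitzOnWith.sub_le_mul_of_ae_fderiv_apply_le {δ c τ : ℝ}
    (hg : LipschitzOnWith K g (ball x δ)) (hc : ∀ᵐ y ∂μ, y ∈ ball x δ → fderiv ℝ g y d ≤ c)
    (hτ : 0 ≤ τ) (hτδ : τ * ‖d‖ < δ) : g (x + τ • d) - g x ≤ c * τ := by
  have key : ∀ ρ ∈ Ioo 0 (δ - τ * ‖d‖), g (x + τ • d) - g x ≤ c * τ + 2 * (K * ρ) := by
    rintro ρ ⟨hρ, hρδ⟩
    have hm : 0 < μ.real (ball x ρ) :=
      ENNReal.toReal_pos (measure_ball_pos μ x hρ).ne' measure_ball_lt_top.ne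
    have hmaps : MapsTo (· + τ • d) (ball x ρ) (ball x δ) :=
      mapsTo_add_smul_ball (by rw [abs_of_nonneg hτ]; linarith)
    have hclose₀ := abs_le.1 (hg.mono (ball_subset_ball (show ρ ≤ δ by nlinarith [norm_nonneg d]))
      |>.abs_setIntegral_ball_sub_le (μ := μ)) |>.2
    have hcloseτ := abs_le.1 ((hg.comp_add_right hmaps).abs_setIntegral_ball_sub_le (μ := μ)) |>.1
    have hmean := hg.setIntegral_comp_add_smul_sub_le (μ := μ) (ρ := ρ) hc hτ (by linarith)
    have hm_mul : μ.real (ball x ρ) * (g (x + τ • d) - g x) ≤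
        μ.real (ball x ρ) * (c * τ + 2 * (K * ρ)) := by linarith
    exact le_of_mul_le_mul_left hm_mul hm
  refine ge_of_tendsto ?_ (eventually_of_mem (Ioo_mem_nhdsGT (sub_pos.2 hτδ)) key)
  exact tendsto_nhdsWithin_of_tendsto_nhds (Continuous.tendsto' (by fun_prop) _ _ (by simp))

end MeanValue

theorem IsLocalMin.exists_mem_Ioo_deriv_nonneg {φ φ' : ℝ → ℝ} {a r : ℝ} (hmin : IsLocalMin φ a)
    (hφ : ∀ t, HasDerivAt φ (φ' t) t) (hr : 0 < r) : ∃ t ∈ Ioo a (a + r), 0 ≤ φ' t := by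
  obtain ⟨b, hab, hb⟩ := ((hmin.filter_mono nhdsWithin_le_nhds).and
    (Ioo_mem_nhdsGT (by linarith : a < a + r))).exists
  obtain ⟨t, ht, hslope⟩ := exists_hasDerivAt_eq_slope φ φ' hb.1
    (fun t _ => (hφ t).continuousAt.continuousWithinAt) (fun t _ => hφ t)
  exact ⟨t, ⟨ht.1, ht.2.trans hb.2⟩, hslope ▸ div_nonneg (sub_nonneg.2 hab) (sub_nonneg.2 hb.1.le)⟩

section SecondOrder

variable {E : Type*} [NormedAddCommGroup E] [InnerProductSpace ℝ E] [FiniteDimensional ℝ E]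
  {F : E → ℝ} {x : E}

theorem IsLocalMin.gradient_eq_zero (hmin : IsLocalMin F x) : gradient F x = 0 := by
  rw [gradient, hmin.fderiv_eq_zero, map_zero]

theorem IsLocalMin.frequently_inner_fderiv_gradient_gt (hmin : IsLocalMin F x)
    (hF : Differentiable ℝ F) (hG : LocallyLipschitz (gradient F)) (d : E) {ε : ℝ} (hε : 0 < ε) :
    ∃ᶠ y in 𝓝 x, DifferentiableAt ℝ (gradient F) y ∧ -ε < ⟪d, fderiv ℝ (gradient F) y d⟫_ℝ := by
  borelize E
  by_contra h
  obtain ⟨K, t, ht, hKt⟩ := hG x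
  obtain ⟨δ, hδ, hball⟩ := Metric.mem_nhds_iff.1 (inter_mem ht (not_frequently.1 h))
  have hKδ : LipschitzOnWith K (gradient F) (ball x δ) := hKt.mono (hball.trans inter_subset_left)
  set g : E → ℝ := fun y => ⟪d, gradient F y⟫_ℝ
  have hg : LipschitzOnWith (‖innerSL ℝ d‖₊ * K) g (ball x δ) :=
    (innerSL ℝ d).lipschitz.comp_lipschitzOnWith hKδ
  have hg' : ∀ᵐ y ∂(Measure.addHaar : Measure E), y ∈ ball x δ → fderiv ℝ g y d ≤ -ε := by
    filter_upwards [hKδ.ae_differentiableWithinAt_of_mem] with y hy hyδ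
    have hdiff := (hy hyδ).differentiableAt (isOpen_ball.mem_nhds hyδ)
    have hfd : fderiv ℝ g y d = ⟪d, fderiv ℝ (gradient F) y d⟫_ℝ := by
      rw [show g = innerSL ℝ d ∘ gradient F from rfl,
        ((innerSL ℝ d).hasFDerivAt.comp y hdiff.hasFDerivAt).fderiv]
      rfl
    rw [hfd]
    simpa [hdiff] using (hball hyδ).2
  have hline : ∀ s : ℝ, HasDerivAt (fun s : ℝ => F (x + s • d)) (g (x + s • d)) s := by
    intro s
    have hs : HasDerivAt (fun s : ℝ => x + s • d) d s := by
      simpa using ((hasDerivAt_id s).smul_const d).const_add x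
    have := (hF (x + s • d)).hasFDerivAt.comp_hasDerivAt s hs
    rwa [← InnerProductSpace.toDual_symm_apply, real_inner_comm] at this
  have hmin_line : IsLocalMin (fun s : ℝ => F (x + s • d)) 0 :=
    IsLocalMin.comp_continuous (g := fun s : ℝ => x + s • d) (b := 0) (by simpa using hmin)
      (by fun_prop)
  obtain ⟨s, hs, hgs⟩ :=
    hmin_line.exists_mem_Ioo_deriv_nonneg hline (by positivity : 0 < δ / (‖d‖ + 1))
  have hsδ : s * (‖d‖ + 1) < δ := (lt_div_iff₀ (by positivity)).1 (by simpa using hs.2)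
  have hdecr := hg.sub_le_mul_of_ae_fderiv_apply_le hg' hs.1.le (by nlinarith [hs.1])
  simp only [g, hmin.gradient_eq_zero, inner_zero_right, sub_zero] at hdecr
  nlinarith [hs.1]

end SecondOrder

theorem LocallyLipschitz.exists_mem_Bsub_le_of_frequently {E W : Type*} [NormedAddCommGroup E]
    [NormedSpace ℝ E] [FiniteDimensional ℝ E] [NormedAddCommGroup W] [NormedSpace ℝ W]
    [FiniteDimensional ℝ W] {G : E → W} {x : E} (hG : LocallyLipschitz G)
    {φ : (E →L[ℝ] W) → ℝ} (hφ : Continuous φ) {c : ℝ}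
    (hfreq : ∀ ε > 0, ∃ᶠ y in 𝓝 x, DifferentiableAt ℝ G y ∧ c - ε < φ (fderiv ℝ G y)) :
    ∃ V ∈ Bsub G x, c ≤ φ V := by
  obtain ⟨K, t, ht, hKt⟩ := hG x
  have hseq (k : ℕ) : ∃ y, (DifferentiableAt ℝ G y ∧ c - 1 / (k + 1) < φ (fderiv ℝ G y)) ∧
      y ∈ interior t ∩ ball x (1 / (k + 1)) :=
    ((hfreq _ Nat.one_div_pos_of_nat).and_eventually
      (inter_mem (interior_mem_nhds.2 ht) (ball_mem_nhds x Nat.one_div_pos_of_nat))).exists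
  choose u hu using hseq
  have hu_lim : Tendsto u atTop (𝓝 x) :=
    tendsto_iff_dist_tendsto_zero.2 (squeeze_zero (fun _ => dist_nonneg)
      (fun k => (mem_ball.1 (hu k).2.2).le) tendsto_one_div_add_atTop_nhds_zero_nat)
  have hu_bdd (k : ℕ) : fderiv ℝ G (u k) ∈ closedBall 0 K := by
    simpa using norm_fderiv_le_of_lipschitzOn ℝ (mem_interior_iff_mem_nhds.1 (hu k).2.1) hKt
  obtain ⟨V, -, ψ, hψ, hV⟩ := (isCompact_closedBall (0 : E →L[ℝ] W) K).tendsto_subseq hu_bdd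
  refine ⟨V, ⟨u ∘ ψ, hu_lim.comp hψ.tendsto_atTop, fun k => (hu (ψ k)).1.1, hV⟩, ?_⟩
  have hlower : Tendsto (fun k => c - 1 / ((ψ k : ℝ) + 1)) atTop (𝓝 c) := by
    simpa using (tendsto_one_div_add_atTop_nhds_zero_nat.comp hψ.tendsto_atTop).const_sub c
  exact le_of_tendsto_of_tendsto hlower ((hφ.tendsto V).comp hV)
    (Eventually.of_forall fun k => (hu (ψ k)).1.2.le)

theorem stmt_1 {n : ℕ} (F : EuclideanSpace ℝ (Fin n) → ℝ)
    (hF : Differentiable ℝ F)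
    (hLip : LocallyLipschitz (fun y => gradient F y))
    (xs : EuclideanSpace ℝ (Fin n)) (hmin : IsLocalMin F xs) :
    gradient F xs = 0 ∧
      ∀ d : EuclideanSpace ℝ (Fin n), ∃ M ∈ genHessian F xs, 0 ≤ ⟪d, M d⟫_ℝ := by
  refine ⟨hmin.gradient_eq_zero, fun d => ?_⟩
  obtain ⟨M, hM, hMd⟩ := hLip.exists_mem_Bsub_le_of_frequently (x := xs)
    (φ := fun V => ⟪d, V d⟫_ℝ) (c := 0) (by fun_prop) fun ε hε => by
      simpa only [zero_sub] using hmin.frequently_inner_fderiv_gradient_gt hF hLip d hε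
  exact ⟨M, subset_convexHull ℝ _ hM, hMd⟩
end

section
/- Let x* be a feasible point of (NSOCP) and, for x ∈ ℝⁿ, define the perturbed critical subspace S(x,x*) = {d ∈ ℝⁿ : Dh(x)d = 0; Dg_i(x)d = 0 for all i ∈ I₀(x*); g̃_i(x)ᵀ Γ_i Dg_i(x)d = 0 for all i ∈ I_B(x*)}. Then the weak constant rank (WCR) property holds at x* — i.e. there is a neighborhood N of x* on which the dimension of the linear span of the family {∇h_i(x) : i = 1,…,p} ∪ {∇g_{ij}(x) : i ∈ I₀(x*), j = 1,…,m_i} ∪ {Dg_i(x)ᵀ Γ_i g̃_i(x) : i ∈ I_B(x*)} is the same for all x ∈ N — if and only if the set-valued map x ↦ S(x,x*) is inner semicontinuous at x*, meaning that for every d ∈ S(x*,x*) and every sequence xᵏ → x* there exist dᵏ → d with dᵏ ∈ S(xᵏ,x*) for all k. -/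
/-!
`S(x, x*)` is the orthogonal complement of the span of the WCR vectors `wcrVectors x`, which depend
continuously on `x`. The rank of a continuous family of vectors is lower semicontinuous, since a
linearly independent subfamily at `x*` stays independent nearby. Inner semicontinuity of the
complements gives the opposite inequality: a basis of `S(x*, x*)`, approximated inside
`S(xᵏ, x*)`, stays linearly independent. Conversely, if the rank is locally constant, then near
`x*` the span is that of a fixed subfamily independent at `x*`, so `S(x, x*)` is the kernel of a
continuous family of maps `L x` with `L x*` surjective. If `R` is a right inverse of `L x*`, then
`L x ∘ R` is invertible near `x*`, and `x ↦ d - R ((L x ∘ R)⁻¹ (L x d))` is a section of these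
kernels through `d`.
-/

open Filter Topology Set
open scoped InnerProductSpace

noncomputable def tailNorm {d : ℕ} (w : EuclideanSpace ℝ (Fin (d + 1))) : ℝ :=
  Real.sqrt (∑ j : Fin d, (w j.succ) ^ 2)

def Lorentz (d : ℕ) : Set (EuclideanSpace ℝ (Fin (d + 1))) := {w | tailNorm w ≤ w 0}

def LorentzBdPos (d : ℕ) : Set (EuclideanSpace ℝ (Fin (d + 1))) :=
  {w | w ≠ 0 ∧ tailNorm w = w 0}

noncomputable def gammaApp {d : ℕ} (w : EuclideanSpace ℝ (Fin (d + 1))) :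
    EuclideanSpace ℝ (Fin (d + 1)) :=
  WithLp.toLp 2 (fun j => if j = 0 then w j else -(w j))

noncomputable def tildeVec {d : ℕ} (w : EuclideanSpace ℝ (Fin (d + 1))) :
    EuclideanSpace ℝ (Fin (d + 1)) :=
  WithLp.toLp 2 (fun j => if j = 0 then tailNorm w else w j)

/-- The perturbed critical subspace `S(x, x*)` of (NSOCP). -/
def pertSubspace {n p r : ℕ} (msub : Fin r → ℕ)
    (g : EuclideanSpace ℝ (Fin n) → PiLp 2 (fun i : Fin r => EuclideanSpace ℝ (Fin (msub i + 1))))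
    (h : EuclideanSpace ℝ (Fin n) → EuclideanSpace ℝ (Fin p))
    (xs x : EuclideanSpace ℝ (Fin n)) : Set (EuclideanSpace ℝ (Fin n)) :=
  {d | fderiv ℝ h x d = 0 ∧
    (∀ i : Fin r, g xs i = 0 → fderiv ℝ (fun y => g y i) x d = 0) ∧
    (∀ i : Fin r, g xs i ∈ LorentzBdPos (msub i) →
      ⟪tildeVec (g x i), gammaApp (fderiv ℝ (fun y => g y i) x d)⟫_ℝ = 0)}

open Module Submodule

theorem ContinuousAt.exists_tendsto_apply_eq_zero_of_range_eq_top {X 𝕜 E F : Type*}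
    [TopologicalSpace X] [NontriviallyNormedField 𝕜] [CompleteSpace 𝕜] [NormedAddCommGroup E]
    [NormedSpace 𝕜 E] [NormedAddCommGroup F] [NormedSpace 𝕜 F] [FiniteDimensional 𝕜 F]
    {L : X → E →L[𝕜] F} {x₀ : X} (hL : ContinuousAt L x₀) (hsurj : (L x₀).range = ⊤) {d : E}
    (hd : L x₀ d = 0) :
    ∃ φ : X → E, Tendsto φ (𝓝 x₀) (𝓝 d) ∧ ∀ᶠ x in 𝓝 x₀, L x (φ x) = 0 := by
  have := FiniteDimensional.complete 𝕜 F
  obtain ⟨R, hR⟩ := (L x₀).exists_rightInverse_of_surjective hsurj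
  have hM : ContinuousAt (fun x => (L x).comp R) x₀ := hL.clm_comp continuousAt_const
  have hM₀ : (L x₀).comp R = ((1 : (F →L[𝕜] F)ˣ) : F →L[𝕜] F) := hR
  have hinv : ContinuousAt (fun x => Ring.inverse ((L x).comp R)) x₀ :=
    (NormedRing.inverse_continuousAt 1).comp_of_eq hM hM₀
  refine ⟨fun x => d - R (Ring.inverse ((L x).comp R) (L x d)), ?_, ?_⟩
  · have : ContinuousAt (fun x => d - R (Ring.inverse ((L x).comp R) (L x d))) x₀ :=
      continuousAt_const.sub
        (R.continuous.continuousAt.comp (hinv.clm_apply (hL.clm_apply continuousAt_const)))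
    simpa [hd] using this.tendsto
  · filter_upwards [hM.eventually (hM₀ ▸ Units.isOpen.mem_nhds (Units.isUnit 1))] with x hx
    rw [map_sub, sub_eq_zero, ← ContinuousLinearMap.comp_apply, ← mul_apply_eq_comp,
      Ring.mul_inverse_cancel _ hx, one_apply_eq_self]

def InnerSemicontinuousAt {X E : Type*} [TopologicalSpace X] [TopologicalSpace E]
    (S : X → Set E) (x₀ : X) : Prop :=
  ∀ d ∈ S x₀, ∀ xk : ℕ → X, Tendsto xk atTop (𝓝 x₀) →
    ∃ dk : ℕ → E, Tendsto dk atTop (𝓝 d) ∧ ∀ k, dk k ∈ S (xk k)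

theorem innerSemicontinuousAt_of_forall_exists_tendsto {X R E : Type*} [TopologicalSpace X]
    [Semiring R] [AddCommMonoid E] [Module R E] [TopologicalSpace E] {S : X → Submodule R E}
    {x₀ : X} (h : ∀ d ∈ S x₀, ∃ φ : X → E, Tendsto φ (𝓝 x₀) (𝓝 d) ∧ ∀ᶠ x in 𝓝 x₀, φ x ∈ S x) :
    InnerSemicontinuousAt (fun x => (S x : Set E)) x₀ := by
  intro d hd xk hxk
  obtain ⟨φ, hφ, hφS⟩ := h d hd
  obtain ⟨K, hK⟩ := eventually_atTop.1 (hxk.eventually hφS)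
  refine ⟨fun k => if K ≤ k then φ (xk k) else 0, ?_, fun k => ?_⟩
  · refine (hφ.comp hxk).congr' ?_
    filter_upwards [eventually_ge_atTop K] with k hk
    simp [hk]
  · dsimp only
    split_ifs with hk
    exacts [hK k hk, zero_mem _]

theorem InnerSemicontinuousAt.eventually_finrank_le {X 𝕜 E : Type*} [TopologicalSpace X]
    [FirstCountableTopology X] [NontriviallyNormedField 𝕜] [CompleteSpace 𝕜] [NormedAddCommGroup E]
    [NormedSpace 𝕜 E] [FiniteDimensional 𝕜 E] {S : X → Submodule 𝕜 E} {x₀ : X}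
    (hS : InnerSemicontinuousAt (fun x => (S x : Set E)) x₀) :
    ∀ᶠ x in 𝓝 x₀, finrank 𝕜 (S x₀) ≤ finrank 𝕜 (S x) := by
  rw [eventually_iff_seq_eventually]
  intro xk hxk
  let b := Module.finBasis 𝕜 (S x₀)
  choose dk hdk hdkS using fun t => hS (b t) (b t).2 xk hxk
  have hb : LinearIndependent 𝕜 (fun t => (b t : E)) :=
    b.linearIndependent.map' _ (ker_subtype _)
  filter_upwards [(tendsto_pi_nhds.2 hdk).eventually hb.eventually] with k hk
  calc finrank 𝕜 (S x₀) = finrank 𝕜 (span 𝕜 (range fun t => dk t k)) := by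
        rw [finrank_span_eq_card hk, Fintype.card_fin]
    _ ≤ finrank 𝕜 (S (xk k)) :=
        Submodule.finrank_mono (span_le.2 (range_subset_iff.2 fun t => hdkS t k))

theorem ContinuousAt.eventually_finrank_span_range_le {X ι 𝕜 E : Type*} [TopologicalSpace X]
    [Finite ι] [NontriviallyNormedField 𝕜] [CompleteSpace 𝕜] [NormedAddCommGroup E]
    [NormedSpace 𝕜 E] [FiniteDimensional 𝕜 E] {v : X → ι → E} {x₀ : X} (hv : ContinuousAt v x₀) :
    ∀ᶠ x in 𝓝 x₀, finrank 𝕜 (span 𝕜 (range (v x₀))) ≤ finrank 𝕜 (span 𝕜 (range (v x))) := by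
  obtain ⟨κ, a, ha, hspan, hli⟩ := exists_linearIndependent' 𝕜 (v x₀)
  have : Finite κ := Finite.of_injective a ha
  have := Fintype.ofFinite κ
  have hva : ContinuousAt (fun x => v x ∘ a) x₀ :=
    (continuous_pi fun e => continuous_apply (a e)).continuousAt.comp hv
  filter_upwards [hva.eventually hli.eventually] with x hx
  calc finrank 𝕜 (span 𝕜 (range (v x₀))) = finrank 𝕜 (span 𝕜 (range (v x ∘ a))) := by
        rw [← hspan, finrank_span_eq_card hli, finrank_span_eq_card hx]
    _ ≤ finrank 𝕜 (span 𝕜 (range (v x))) :=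
        Submodule.finrank_mono (span_mono (range_comp_subset_range a (v x)))

section OrthogonalSpan

variable {X ι 𝕜 E : Type*} [TopologicalSpace X] [RCLike 𝕜] [NormedAddCommGroup E]
  [InnerProductSpace 𝕜 E]

theorem mem_orthogonal_span_range_iff {v : ι → E} {d : E} :
    d ∈ (span 𝕜 (range v))ᗮ ↔ ∀ j, ⟪v j, d⟫_𝕜 = 0 := by
  refine ⟨fun hd j => inner_right_of_mem_orthogonal (subset_span (mem_range_self j)) hd,
    fun hd => (mem_orthogonal _ _).2 fun u hu => ?_⟩
  induction hu using span_induction with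
  | mem w hw => obtain ⟨j, rfl⟩ := hw; exact hd j
  | zero => exact inner_zero_left _
  | add w₁ w₂ _ _ h₁ h₂ => rw [inner_add_left, h₁, h₂, add_zero]
  | smul c w _ hw => rw [inner_smul_left, hw, mul_zero]

theorem ker_pi_innerSL (v : ι → E) :
    (ContinuousLinearMap.pi fun j => innerSL 𝕜 (v j)).ker = (span 𝕜 (range v))ᗮ := by
  ext d
  simp [mem_orthogonal_span_range_iff, funext_iff]

theorem range_pi_innerSL_eq_top [Finite ι] [FiniteDimensional 𝕜 E] {v : ι → E}
    (hv : LinearIndependent 𝕜 v) :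
    (ContinuousLinearMap.pi fun j => innerSL 𝕜 (v j)).range = ⊤ := by
  have : Fintype ι := Fintype.ofFinite ι
  apply Submodule.eq_top_of_finrank_eq
  have hrank := LinearMap.finrank_range_add_finrank_ker
    (ContinuousLinearMap.pi fun j => innerSL 𝕜 (v j) : E →ₗ[𝕜] ι → 𝕜)
  have horth := (span 𝕜 (range v)).finrank_add_finrank_orthogonal
  rw [finrank_span_eq_card hv] at horth
  rw [ker_pi_innerSL] at hrank
  rw [finrank_fintype_fun_eq_card]
  omega

end OrthogonalSpan

section OrthogonalSpanFamily

variable {X ι 𝕜 E : Type*} [TopologicalSpace X] [Finite ι] [RCLike 𝕜] [NormedAddCommGroup E]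
  [InnerProductSpace 𝕜 E] [FiniteDimensional 𝕜 E] {v : X → ι → E} {x₀ : X}

theorem ContinuousAt.innerSemicontinuousAt_orthogonal_span_range (hv : ContinuousAt v x₀)
    (hrank : ∀ᶠ x in 𝓝 x₀,
      finrank 𝕜 (span 𝕜 (range (v x))) ≤ finrank 𝕜 (span 𝕜 (range (v x₀)))) :
    InnerSemicontinuousAt (fun x => ((span 𝕜 (range (v x)))ᗮ : Set E)) x₀ := by
  obtain ⟨κ, a, ha, hspan, hli⟩ := exists_linearIndependent' 𝕜 (v x₀)
  have : Finite κ := Finite.of_injective a ha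
  have := Fintype.ofFinite κ
  have hva : ContinuousAt (fun x => v x ∘ a) x₀ :=
    (continuous_pi fun e => continuous_apply (a e)).continuousAt.comp hv
  have hspan_eq : ∀ᶠ x in 𝓝 x₀, span 𝕜 (range (v x ∘ a)) = span 𝕜 (range (v x)) := by
    filter_upwards [hva.eventually hli.eventually, hrank] with x hx hxrank
    refine Submodule.eq_of_le_of_finrank_le (span_mono (range_comp_subset_range a (v x))) ?_
    rwa [finrank_span_eq_card hx, ← finrank_span_eq_card hli, hspan]
  let L : X → E →L[𝕜] κ → 𝕜 := fun x => ContinuousLinearMap.pi fun e => innerSL 𝕜 (v x (a e))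
  have hL : ContinuousAt L x₀ := continuousAt_clm_apply.2 fun d => continuousAt_pi.2 fun e =>
    ((continuous_apply e).continuousAt.comp hva).inner continuousAt_const
  refine innerSemicontinuousAt_of_forall_exists_tendsto
    (S := fun x => (span 𝕜 (range (v x)))ᗮ) fun d hd => ?_
  have hd' : d ∈ (L x₀).ker := by rwa [ker_pi_innerSL, ← Function.comp_def, hspan]
  obtain ⟨φ, hφ, hφL⟩ := hL.exists_tendsto_apply_eq_zero_of_range_eq_top
    (range_pi_innerSL_eq_top hli) hd'
  refine ⟨φ, hφ, ?_⟩
  filter_upwards [hφL, hspan_eq] with x hx hxspan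
  rw [← hxspan]
  exact (ker_pi_innerSL (v x ∘ a)).le hx

theorem finrank_span_range_locallyConstant_iff_innerSemicontinuousAt [FirstCountableTopology X]
    (hv : ContinuousAt v x₀) :
    (∃ N ∈ 𝓝 x₀, ∃ c : ℕ, ∀ x ∈ N, finrank 𝕜 (span 𝕜 (range (v x))) = c) ↔
      InnerSemicontinuousAt (fun x => ((span 𝕜 (range (v x)))ᗮ : Set E)) x₀ := by
  constructor
  · rintro ⟨N, hN, c, hc⟩
    refine hv.innerSemicontinuousAt_orthogonal_span_range ?_
    filter_upwards [hN] with x hx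
    rw [hc x hx, hc x₀ (mem_of_mem_nhds hN)]
  · intro hS
    refine ⟨_, (hS.eventually_finrank_le (S := fun x => (span 𝕜 (range (v x)))ᗮ)).and
      (hv.eventually_finrank_span_range_le (𝕜 := 𝕜)), finrank 𝕜 (span 𝕜 (range (v x₀))),
      fun x hx => ?_⟩
    obtain ⟨hle, hge⟩ := hx
    have := (span 𝕜 (range (v x))).finrank_add_finrank_orthogonal
    have := (span 𝕜 (range (v x₀))).finrank_add_finrank_orthogonal
    omega

end OrthogonalSpanFamily

section Cone

variable {d : ℕ}

theorem continuous_tailNorm : Continuous (tailNorm (d := d)) := by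
  unfold tailNorm
  fun_prop

theorem continuous_tildeVec : Continuous (tildeVec (d := d)) := by
  refine (PiLp.continuous_toLp 2 _).comp (continuous_pi fun j => ?_)
  split_ifs
  exacts [continuous_tailNorm, (PiLp.continuous_apply 2 _ j)]

theorem continuous_gammaApp : Continuous (gammaApp (d := d)) := by
  refine (PiLp.continuous_toLp 2 _).comp (continuous_pi fun j => ?_)
  split_ifs
  exacts [PiLp.continuous_apply 2 _ j, (PiLp.continuous_apply 2 _ j).neg]

theorem inner_gammaApp_left (w z : EuclideanSpace ℝ (Fin (d + 1))) :
    ⟪gammaApp w, z⟫_ℝ = ⟪w, gammaApp z⟫_ℝ := by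
  simp only [PiLp.inner_apply, RCLike.inner_apply, conj_trivial]
  refine Finset.sum_congr rfl fun j _ => ?_
  by_cases hj : j = 0 <;> simp [gammaApp, hj]

end Cone

section Gradient

variable {𝕜 F : Type*} [RCLike 𝕜] [NormedAddCommGroup F] [InnerProductSpace 𝕜 F] [CompleteSpace F]

theorem inner_gradient_apply_left {ι : Type*} [Fintype ι] {f : F → EuclideanSpace 𝕜 ι} {x : F}
    (hf : DifferentiableAt 𝕜 f x) (i : ι) (d : F) :
    ⟪gradient (fun y => f y i) x, d⟫_𝕜 = fderiv 𝕜 f x d i := by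
  rw [inner_gradient_left]
  exact congrArg (· d) ((EuclideanSpace.proj i).hasFDerivAt.comp x hf.hasFDerivAt).fderiv

theorem ContDiff.continuous_gradient {f : F → 𝕜} (hf : ContDiff 𝕜 1 f) :
    Continuous (gradient f) :=
  (InnerProductSpace.toDual 𝕜 F).symm.continuous.comp (hf.continuous_fderiv one_ne_zero)

end Gradient

section NSOCP

variable {n p r : ℕ} (msub : Fin r → ℕ)
  (g : EuclideanSpace ℝ (Fin n) → PiLp 2 (fun i : Fin r => EuclideanSpace ℝ (Fin (msub i + 1))))
  (h : EuclideanSpace ℝ (Fin n) → EuclideanSpace ℝ (Fin p)) (xs : EuclideanSpace ℝ (Fin n))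

noncomputable def wcrVectors (x : EuclideanSpace ℝ (Fin n)) :
    Fin p ⊕ ((i : {i : Fin r // g xs i = 0}) × Fin (msub i.1 + 1) ⊕
      {i : Fin r // g xs i ∈ LorentzBdPos (msub i)}) → EuclideanSpace ℝ (Fin n) :=
  Sum.elim
    (fun i : Fin p => gradient (fun y => h y i) x)
    (Sum.elim
      (fun q : (i : {i : Fin r // g xs i = 0}) × Fin (msub i.1 + 1) =>
        gradient (fun y => g y q.1.1 q.2) x)
      (fun i : {i : Fin r // g xs i ∈ LorentzBdPos (msub i)} =>
        (fderiv ℝ (fun y => g y i.1) x).adjoint (gammaApp (tildeVec (g x i.1)))))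

variable {msub g h}

theorem continuous_wcrVectors (hg : ContDiff ℝ 1 g) (hh : ContDiff ℝ 1 h) :
    Continuous (wcrVectors msub g h xs) := by
  have hgi : ∀ i, ContDiff ℝ 1 (fun y => g y i) := fun i => by fun_prop
  refine continuous_pi fun j => ?_
  rcases j with i | ⟨i, j⟩ | i
  · exact ContDiff.continuous_gradient (by fun_prop)
  · exact ContDiff.continuous_gradient (by fun_prop)
  · have hadj := ContinuousLinearMap.adjoint.continuous.comp ((hgi i).continuous_fderiv one_ne_zero)
    exact hadj.clm_apply (continuous_gammaApp.comp (continuous_tildeVec.comp (hgi i).continuous))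

theorem pertSubspace_eq_orthogonal (hg : Differentiable ℝ g) (hh : Differentiable ℝ h)
    (x : EuclideanSpace ℝ (Fin n)) :
    pertSubspace msub g h xs x = (span ℝ (range (wcrVectors msub g h xs x)))ᗮ := by
  have hgi : ∀ i, DifferentiableAt ℝ (fun y => g y i) x := fun i => by fun_prop
  ext d
  simp only [pertSubspace, mem_ofPred_eq, PiLp.ext_iff, PiLp.zero_apply, inner_gammaApp_left,
    SetLike.mem_coe, mem_orthogonal_span_range_iff, Sum.forall, wcrVectors,
    Sum.elim_inl, Sum.elim_inr, Sigma.forall, Subtype.forall, inner_gradient_apply_left (hh x),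
    inner_gradient_apply_left (hgi _), ContinuousLinearMap.adjoint_inner_left]

end NSOCP

theorem stmt_5_general {n p r : ℕ} (msub : Fin r → ℕ)
    (g : EuclideanSpace ℝ (Fin n) → PiLp 2 (fun i : Fin r => EuclideanSpace ℝ (Fin (msub i + 1))))
    (h : EuclideanSpace ℝ (Fin n) → EuclideanSpace ℝ (Fin p))
    (hg : ContDiff ℝ 2 g) (hh : ContDiff ℝ 2 h)
    (xs : EuclideanSpace ℝ (Fin n)) :
    -- WCR at `xs`:
    ((∃ N ∈ 𝓝 xs, ∃ c : ℕ, ∀ x ∈ N,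
      Module.finrank ℝ (Submodule.span ℝ (Set.range
        (Sum.elim
          (fun i : Fin p => gradient (fun y => h y i) x)
          (Sum.elim
            (fun q : (i : {i : Fin r // g xs i = 0}) × Fin (msub i.1 + 1) =>
              gradient (fun y => g y q.1.1 q.2) x)
            (fun i : {i : Fin r // g xs i ∈ LorentzBdPos (msub i)} =>
              (fderiv ℝ (fun y => g y i.1) x).adjoint (gammaApp (tildeVec (g x i.1)))))))) = c)
    ↔
    -- inner semicontinuity of `x ↦ S(x, x*)` at `xs`:
    (∀ d ∈ pertSubspace msub g h xs xs, ∀ xk : ℕ → EuclideanSpace ℝ (Fin n),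
      Tendsto xk atTop (𝓝 xs) →
        ∃ dk : ℕ → EuclideanSpace ℝ (Fin n),
          Tendsto dk atTop (𝓝 d) ∧ ∀ k, dk k ∈ pertSubspace msub g h xs (xk k))) := by
  have hg₁ : ContDiff ℝ 1 g := hg.of_le (by norm_num)
  have hh₁ : ContDiff ℝ 1 h := hh.of_le (by norm_num)
  have hS : pertSubspace msub g h xs =
      fun x => ((span ℝ (range (wcrVectors msub g h xs x)))ᗮ : Set _) :=
    funext (pertSubspace_eq_orthogonal xs (hg₁.differentiable one_ne_zero)
      (hh₁.differentiable one_ne_zero))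
  rw [hS]
  exact finrank_span_range_locallyConstant_iff_innerSemicontinuousAt
    (continuous_wcrVectors xs hg₁ hh₁).continuousAt

theorem stmt_5 {n p r : ℕ} (msub : Fin r → ℕ)
    (f : EuclideanSpace ℝ (Fin n) → ℝ)
    (g : EuclideanSpace ℝ (Fin n) → PiLp 2 (fun i : Fin r => EuclideanSpace ℝ (Fin (msub i + 1))))
    (h : EuclideanSpace ℝ (Fin n) → EuclideanSpace ℝ (Fin p))
    (hf : ContDiff ℝ 2 f) (hg : ContDiff ℝ 2 g) (hh : ContDiff ℝ 2 h)
    (xs : EuclideanSpace ℝ (Fin n))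
    -- `xs` is feasible for (NSOCP):
    (hfeas : (∀ i, g xs i ∈ Lorentz (msub i)) ∧ h xs = 0) :
    -- WCR at `xs`:
    ((∃ N ∈ 𝓝 xs, ∃ c : ℕ, ∀ x ∈ N,
      Module.finrank ℝ (Submodule.span ℝ (Set.range
        (Sum.elim
          (fun i : Fin p => gradient (fun y => h y i) x)
          (Sum.elim
            (fun q : (i : {i : Fin r // g xs i = 0}) × Fin (msub i.1 + 1) =>
              gradient (fun y => g y q.1.1 q.2) x)
            (fun i : {i : Fin r // g xs i ∈ LorentzBdPos (msub i)} =>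
              (fderiv ℝ (fun y => g y i.1) x).adjoint (gammaApp (tildeVec (g x i.1)))))))) = c)
    ↔
    -- inner semicontinuity of `x ↦ S(x, x*)` at `xs`:
    (∀ d ∈ pertSubspace msub g h xs xs, ∀ xk : ℕ → EuclideanSpace ℝ (Fin n),
      Tendsto xk atTop (𝓝 xs) →
        ∃ dk : ℕ → EuclideanSpace ℝ (Fin n),
          Tendsto dk atTop (𝓝 d) ∧ ∀ k, dk k ∈ pertSubspace msub g h xs (xk k))) :=
  stmt_5_general msub g h hg hh xs
end
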